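/- Let A be a complex unital Banach algebra, a ∈ A quasinilpotent, and b ∈ A with g-Drazin inverse b^d. Let λ ≠ 0 be a complex number and write b^π = 1 − b b^d. If ab = λ b a b^π, then a + b has a generalized Drazin inverse given by (a+b)^d = b^d + Σ_{n≥0} (b^d)^{n+2} a (a+b)^n. -/

import Mathlib

variable {𝔸 : Type*} [NormedRing 𝔸] [NormedAlgebra ℂ 𝔸] [CompleteSpace 𝔸]

/-- Quasinilpotent: spectral radius zero. -/
def IsQuasinilpotent (a : 𝔸) : Prop := spectralRadius ℂ a = 0

/-- `b` is a g-Drazin inverse of `a`. -/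
def IsGDrazinInverse (a b : 𝔸) : Prop :=
  Commute a b ∧ b * a * b = b ∧ IsQuasinilpotent (a - a ^ 2 * b)

/-!
Put `p = 1 - b * bd`. From `a * b = λ • (b * a * p)` and `p * bd = 0` one gets `a * bd = 0`,
hence `a * p = a`: with respect to the idempotent `b * bd`, the element `a + b` is upper
triangular, with `bd` inverting its first diagonal corner and `c = p * (a + b) = p * a + b * p`
as its second one. Both `p * a` (a swap of `a * p = a`) and `b * p = b - b ^ 2 * bd` are
quasinilpotent, and they `λ`-commute. When `u * v = λ • (v * u)` with `‖λ‖ ≤ 1`, each of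
the `2 ^ n` words in `(u + v) ^ n` reorders to a power of `λ` times `v ^ k * u ^ (n - k)`, so
`‖(u + v) ^ n‖` decays faster than any geometric sequence; for `‖λ‖ > 1` swap `u` and `v`.

Since `a * (a + b) ^ n = a * c ^ n`, the series converges, and `w = ∑ bd ^ n * a * (a + b) ^ n`
satisfies `w = a + bd * w * (a + b)` and `w * bd = 0`. These identities make the candidate
`x = bd + bd ^ 2 * w` commute with `a + b` and satisfy `x * (a + b) * x = x`, and they write
`(a + b) - (a + b) ^ 2 * x` as `(1 - bd * w) * c`, while `c * (1 - bd * w) = c`.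
-/

open Filter

theorem isQuasinilpotent_iff_spectrum_subset {A : Type*} [NormedRing A] [NormedAlgebra ℂ A]
    {x : A} :
    IsQuasinilpotent x ↔ spectrum ℂ x ⊆ {0} := by
  simp [IsQuasinilpotent, spectralRadius, Set.subset_def]

theorem isQuasinilpotent_mul_comm {A : Type*} [NormedRing A] [NormedAlgebra ℂ A] {x y : A} :
    IsQuasinilpotent (x * y) ↔ IsQuasinilpotent (y * x) := by
  simp only [isQuasinilpotent_iff_spectrum_subset, ← Set.sdiff_eq_empty,
    spectrum.nonzero_mul_comm]

theorem IsQuasinilpotent.exists_norm_pow_le {x : 𝔸} (hx : IsQuasinilpotent x) {ε : ℝ}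
    (hε : 0 < ε) : ∃ C, ∀ n, ‖x ^ n‖ ≤ C * ε ^ n := by
  have hlim := spectrum.pow_norm_pow_one_div_tendsto_nhds_spectralRadius x
  rw [hx] at hlim
  have hev : ∀ᶠ n : ℕ in atTop, ‖x ^ n‖ ≤ 1 * ‖ε ^ n‖ := by
    filter_upwards [hlim.eventually_lt_const (ENNReal.ofReal_pos.2 hε), eventually_ne_atTop 0]
      with n hn hn0
    rw [ENNReal.ofReal_lt_ofReal_iff hε] at hn
    rw [one_mul, Real.norm_of_nonneg (by positivity),
      ← Real.rpow_inv_natCast_pow (norm_nonneg _) hn0]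
    exact pow_le_pow_left₀ (by positivity) (by simpa using hn.le) n
  obtain ⟨C, hC⟩ := (Asymptotics.isBigO_nat_atTop_iff fun n h => absurd h (by positivity)).1
    (Asymptotics.IsBigO.of_bound 1 hev)
  exact ⟨C, fun n => by simpa [abs_of_pos hε] using hC n⟩

theorem isQuasinilpotent_of_norm_pow_le {x : 𝔸}
    (h : ∀ ε > 0, ∃ C, ∀ n, ‖x ^ n‖ ≤ C * ε ^ n) : IsQuasinilpotent x := by
  refine isQuasinilpotent_iff_spectrum_subset.2 fun z hz => ?_
  by_contra hz0
  have hz0 : 0 < ‖z‖ := norm_pos_iff.2 hz0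
  obtain ⟨C, hC⟩ := h (‖z‖ / 2) (half_pos hz0)
  obtain ⟨n, hn⟩ := pow_unbounded_of_one_lt (C * ‖(1 : 𝔸)‖) one_lt_two
  have hzn : ‖z‖ ^ n ≤ C * (‖z‖ / 2) ^ n * ‖(1 : 𝔸)‖ := calc
    ‖z‖ ^ n = ‖z ^ n‖ := (norm_pow z n).symm
    _ ≤ ‖x ^ n‖ * ‖(1 : 𝔸)‖ :=
      spectrum.norm_le_norm_mul_of_mem (spectrum.pow_mem_pow x n hz)
    _ ≤ C * (‖z‖ / 2) ^ n * ‖(1 : 𝔸)‖ := by gcongr; exact hC n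
  rw [div_pow, mul_div_assoc', div_mul_eq_mul_div, le_div_iff₀ (by positivity)] at hzn
  nlinarith [pow_pos hz0 n]

theorem mul_pow_eq_smul_pow_mul {K R : Type*} [CommSemiring K] [Semiring R] [Algebra K R]
    {u v : R} {q : K} (huv : u * v = q • (v * u)) (k : ℕ) :
    u * v ^ k = q ^ k • (v ^ k * u) := by
  induction k with
  | zero => simp
  | succ k ih =>
    rw [pow_succ, ← mul_assoc, ih, smul_mul_assoc, mul_assoc, huv, mul_smul_comm, smul_smul,
      ← mul_assoc, ← pow_succ, pow_succ]

theorem exists_multiset_sum_eq_add_pow {K R : Type*} [CommSemiring K] [Semiring R] [Algebra K R]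
    {u v : R} {q : K} (huv : u * v = q • (v * u)) (n : ℕ) :
    ∃ s : Multiset R, Multiset.card s = 2 ^ n ∧ s.sum = (u + v) ^ n ∧
      ∀ x ∈ s, ∃ k ≤ n, ∃ j : ℕ, x = q ^ j • (v ^ k * u ^ (n - k)) := by
  induction n with
  | zero => exact ⟨{1}, rfl, by simp, fun x hx => ⟨0, le_rfl, 0, by simp_all⟩⟩
  | succ n ih =>
    obtain ⟨s, hcard, hsum, hs⟩ := ih
    refine ⟨s.map (u * ·) + s.map (v * ·), by simp [hcard, pow_succ, mul_two], ?_, ?_⟩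
    · rw [Multiset.sum_add, Multiset.sum_map_mul_left, Multiset.sum_map_mul_left, Multiset.map_id',
        hsum, pow_succ', add_mul]
    · simp only [Multiset.mem_add, Multiset.mem_map]
      rintro _ (⟨x, hx, rfl⟩ | ⟨x, hx, rfl⟩) <;> obtain ⟨k, hk, j, rfl⟩ := hs x hx
      · refine ⟨k, hk.trans n.le_succ, j + k, ?_⟩
        rw [mul_smul_comm, ← mul_assoc, mul_pow_eq_smul_pow_mul huv, smul_mul_assoc, smul_smul,
          ← pow_add, mul_assoc, ← pow_succ', Nat.succ_sub hk]
      · refine ⟨k + 1, by omega, j, ?_⟩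
        rw [mul_smul_comm, ← mul_assoc, ← pow_succ', Nat.add_sub_add_right]

theorem IsQuasinilpotent.add_of_mul_eq_smul_mul_of_norm_le_one {u v : 𝔸} {q : ℂ}
    (hq : ‖q‖ ≤ 1) (hu : IsQuasinilpotent u) (hv : IsQuasinilpotent v)
    (huv : u * v = q • (v * u)) :
    IsQuasinilpotent (u + v) := by
  refine isQuasinilpotent_of_norm_pow_le fun ε hε => ?_
  obtain ⟨Cu, hCu⟩ := hu.exists_norm_pow_le (half_pos hε)
  obtain ⟨Cv, hCv⟩ := hv.exists_norm_pow_le (half_pos hε)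
  refine ⟨Cv * Cu, fun n => ?_⟩
  obtain ⟨s, hcard, hsum, hs⟩ := exists_multiset_sum_eq_add_pow huv n
  have hword : ∀ x ∈ s.map (‖·‖), x ≤ Cv * Cu * (ε / 2) ^ n := by
    simp only [Multiset.mem_map]
    rintro _ ⟨_, hx, rfl⟩
    obtain ⟨k, hk, j, rfl⟩ := hs _ hx
    calc ‖q ^ j • (v ^ k * u ^ (n - k))‖ ≤ 1 * (‖v ^ k‖ * ‖u ^ (n - k)‖) := by
          rw [norm_smul, norm_pow]
          gcongr
          exacts [pow_le_one₀ (norm_nonneg q) hq, norm_mul_le _ _]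
      _ ≤ Cv * (ε / 2) ^ k * (Cu * (ε / 2) ^ (n - k)) := by
          rw [one_mul]
          exact mul_le_mul (hCv k) (hCu _) (norm_nonneg _) ((norm_nonneg _).trans (hCv k))
      _ = Cv * Cu * (ε / 2) ^ n := by
          rw [mul_mul_mul_comm, ← pow_add, Nat.add_sub_cancel' hk]
  calc ‖(u + v) ^ n‖ ≤ (s.map (‖·‖)).sum := hsum ▸ norm_multiset_sum_le s
    _ ≤ 2 ^ n * (Cv * Cu * (ε / 2) ^ n) := by
        simpa [hcard] using Multiset.sum_le_card_nsmul _ _ hword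
    _ = Cv * Cu * ε ^ n := by rw [div_pow]; field_simp

theorem IsQuasinilpotent.add_of_mul_eq_smul_mul {u v : 𝔸} {q : ℂ} (hq : q ≠ 0)
    (hu : IsQuasinilpotent u) (hv : IsQuasinilpotent v) (huv : u * v = q • (v * u)) :
    IsQuasinilpotent (u + v) := by
  rcases le_or_gt ‖q‖ 1 with hq1 | hq1
  · exact hu.add_of_mul_eq_smul_mul_of_norm_le_one hq1 hv huv
  · rw [add_comm]
    refine hv.add_of_mul_eq_smul_mul_of_norm_le_one (q := q⁻¹) ?_ hu ?_
    · rw [norm_inv]; exact inv_le_one_of_one_le₀ hq1.le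
    · rw [huv, smul_smul, inv_mul_cancel₀ hq, one_smul]

theorem norm_pow_mul_le {R : Type*} [SeminormedRing R] (x y : R) (n : ℕ) :
    ‖x ^ n * y‖ ≤ ‖x‖ ^ n * ‖y‖ := by
  induction n with
  | zero => simp
  | succ n ih =>
    rw [pow_succ', mul_assoc, pow_succ', mul_assoc]
    exact (norm_mul_le _ _).trans (by gcongr)

theorem IsQuasinilpotent.summable_pow_mul_mul_pow {c : 𝔸} (hc : IsQuasinilpotent c)
    (y z : 𝔸) :
    Summable fun n => y ^ n * z * c ^ n := by
  obtain ⟨C, hC⟩ := hc.exists_norm_pow_le (ε := (2 * (‖y‖ + 1))⁻¹) (by positivity)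
  have hC0 : 0 ≤ C := by simpa using (norm_nonneg _).trans (hC 0)
  refine .of_norm_bounded (summable_geometric_two.mul_left (‖z‖ * C)) fun n => ?_
  have hy : ‖y‖ * (2 * (‖y‖ + 1))⁻¹ ≤ 1 / 2 := by
    rw [← div_eq_mul_inv, div_le_iff₀ (by positivity)]
    linarith
  calc ‖y ^ n * z * c ^ n‖ ≤ ‖y‖ ^ n * ‖z‖ * (C * (2 * (‖y‖ + 1))⁻¹ ^ n) :=
        (norm_mul_le _ _).trans
          (mul_le_mul (norm_pow_mul_le y z n) (hC n) (norm_nonneg _) (by positivity))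
    _ = ‖z‖ * C * (‖y‖ * (2 * (‖y‖ + 1))⁻¹) ^ n := by ring
    _ ≤ ‖z‖ * C * (1 / 2) ^ n := by
        gcongr

theorem mul_pow_eq_mul_pow_of_mul_eq {M : Type*} [Monoid M] {u s c : M} (hc : c * s = c * c)
    (hu : u * s = u * c) (n : ℕ) : u * s ^ n = u * c ^ n := by
  induction n generalizing u with
  | zero => simp
  | succ n ih =>
    rw [pow_succ', ← mul_assoc, hu, ih (by rw [mul_assoc, hc, mul_assoc]), mul_assoc,
      ← pow_succ']

theorem tsum_pow_mul_mul_pow_eq {R : Type*} [Ring R] [TopologicalSpace R] [IsTopologicalRing R]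
    [T2Space R] {y a c : R} (h : Summable fun n => y ^ n * a * c ^ n) :
    ∑' n, y ^ n * a * c ^ n = a + y * ((∑' n, y ^ n * a * c ^ n) * c) := by
  conv_lhs => rw [h.tsum_eq_zero_add]
  rw [← h.tsum_mul_right, ← (h.mul_right c).tsum_mul_left]
  simp only [pow_zero, one_mul, mul_one]
  exact congrArg (a + ·) (tsum_congr fun n => by simp only [pow_succ' y, pow_succ c, mul_assoc])

theorem isGDrazinInverse_add_add_sq_mul {A : Type*} [NormedRing A] [NormedAlgebra ℂ A]
    {a b y w : A} (hby : Commute b y) (hyby : y * b * y = y)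
    (hay : a * y = 0) (hwy : w * y = 0) (hw : w = a + y * (w * (a + b)))
    (hc : IsQuasinilpotent ((1 - b * y) * (a + b))) :
    IsGDrazinInverse (a + b) (y + y ^ 2 * w) := by
  have hsx : (a + b) * (y + y ^ 2 * w) = b * y + y * w := by
    linear_combination (norm := noncomm_ring) hay * (1 + y * w) + hby.eq * y * w + hyby * w
  have hxs : (y + y ^ 2 * w) * (a + b) = b * y + y * w := by
    linear_combination (norm := noncomm_ring) -hby.eq - y * hw
  refine ⟨hsx.trans hxs.symm, ?_, ?_⟩
  · linear_combination (norm := noncomm_ring) hxs * (y + y ^ 2 * w) +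
      (hby.eq * y + hyby + y * hwy) * (1 + y * w)
  · -- `w * (b * y) = 0`, so `(1 - y * w) * (1 - b * y) = 1 - b * y - y * w`
    have hres : (a + b) - (a + b) ^ 2 * (y + y ^ 2 * w) =
        (1 - y * w) * ((1 - b * y) * (a + b)) := by
      linear_combination (norm := noncomm_ring) -(a + b) * hsx - a * hby.eq - hay * b - hay * w
        - b * y * hw - hby.eq * y * w * (a + b) - hyby * w * (a + b) - y * w * hby.eq * (a + b)
        - y * hwy * b * (a + b) - b * hby.eq
    have hcw : (1 - b * y) * (a + b) * (1 - y * w) = (1 - b * y) * (a + b) := by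
      linear_combination (norm := noncomm_ring) -((1 - b * y) * hay - b * hyby) * w
    rw [hres]
    exact isQuasinilpotent_mul_comm.1 (by rwa [hcw])

theorem isGDrazinInverse_add_of_mul_eq_zero {a b y : 𝔸} (hby : Commute b y)
    (hyby : y * b * y = y) (hay : a * y = 0) (hc : IsQuasinilpotent ((1 - b * y) * (a + b))) :
    IsGDrazinInverse (a + b) (y + ∑' n : ℕ, y ^ (n + 2) * a * (a + b) ^ n) := by
  have hcs : (1 - b * y) * (a + b) * (a + b) =
      (1 - b * y) * (a + b) * ((1 - b * y) * (a + b)) := by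
    linear_combination (norm := noncomm_ring)
      ((1 - b * y) * (a * hby.eq + hay * b) - b * b * hyby + b * hby.eq * b * y) * (a + b)
  have has : a * (a + b) = a * ((1 - b * y) * (a + b)) := by
    linear_combination (norm := noncomm_ring) a * hby.eq * (a + b) + hay * b * (a + b)
  have hpow := mul_pow_eq_mul_pow_of_mul_eq hcs has
  have hcy : (1 - b * y) * (a + b) * y = 0 := by
    linear_combination (norm := noncomm_ring) (1 - b * y) * hay - b * hyby
  have hay' : ∀ n, a * (a + b) ^ n * y = 0 := by
    intro n
    rw [hpow]
    cases n with
    | zero => simpa using hay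
    | succ n => rw [pow_succ, ← mul_assoc, mul_assoc _ _ y, hcy, mul_zero]
  have hsum : Summable fun n => y ^ n * a * (a + b) ^ n := by
    simpa only [mul_assoc, hpow] using hc.summable_pow_mul_mul_pow y a
  have hwy : (∑' n, y ^ n * a * (a + b) ^ n) * y = 0 := by
    rw [← hsum.tsum_mul_right]
    refine (tsum_congr fun n => ?_).trans tsum_zero
    rw [mul_assoc (y ^ n), mul_assoc, hay', mul_zero]
  have hx : ∑' n : ℕ, y ^ (n + 2) * a * (a + b) ^ n =
      y ^ 2 * ∑' n, y ^ n * a * (a + b) ^ n := by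
    rw [← hsum.tsum_mul_left]
    simp only [← mul_assoc, ← pow_add, add_comm]
  rw [hx]
  exact isGDrazinInverse_add_add_sq_mul hby hyby hay hwy (tsum_pow_mul_mul_pow_eq hsum) hc

theorem IsQuasinilpotent.mul_add_of_mul_eq_smul {a b p : 𝔸} {lam : ℂ} (hlam : lam ≠ 0)
    (hp : IsIdempotentElem p) (hpb : Commute p b) (hap : a * p = a)
    (ha : IsQuasinilpotent a) (hbp : IsQuasinilpotent (b * p))
    (hab : a * b = lam • (b * a * p)) : IsQuasinilpotent (p * (a + b)) := by
  have hpa : IsQuasinilpotent (p * a) := isQuasinilpotent_mul_comm.1 (by rwa [hap])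
  have hqc : p * a * (b * p) = lam • (b * p * (p * a)) := by
    calc p * a * (b * p) = p * (a * b) * p := by noncomm_ring
      _ = lam • (p * b * (a * p) * p) := by
          rw [hab, mul_smul_comm, smul_mul_assoc, mul_assoc b, mul_assoc _ b]
      _ = lam • (b * p * (p * a)) := by
          congr 1
          linear_combination (norm := noncomm_ring) p * b * hap * p + p * b * hap + hpb.eq * a
            - b * hp.eq * a
  rw [mul_add, hpb.eq]
  exact hpa.add_of_mul_eq_smul_mul hlam hbp hqc

/-- if `a` is quasinilpotent, `b` has g-Drazin inverse `bd`,
`λ ≠ 0` and `a*b = λ • (b*a*bᵖ)` where `bᵖ = 1 - b*bd`, then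
`(a+b)ᵈ = bd + Σ_{n≥0} bd^(n+2) * a * (a+b)^n`. -/
theorem gDrazin_add_of_quasinilpotent (a b bd : 𝔸) (lam : ℂ) (hlam : lam ≠ 0)
    (ha : IsQuasinilpotent a) (hb : IsGDrazinInverse b bd)
    (hab : a * b = lam • (b * a * (1 - b * bd))) :
    IsGDrazinInverse (a + b) (bd + ∑' n : ℕ, bd ^ (n + 2) * a * (a + b) ^ n) := by
  obtain ⟨hbbd, hinv, hq⟩ := hb
  have habbd : a * b * bd = 0 := by
    rw [hab, smul_mul_assoc, mul_assoc, sub_mul, one_mul, hbbd.eq, hinv, sub_self, mul_zero,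
      smul_zero]
  have habd : a * bd = 0 := by
    linear_combination (norm := noncomm_ring) -a * hinv - a * hbbd.eq * bd + habbd * bd
  refine isGDrazinInverse_add_of_mul_eq_zero hbbd hinv habd
    (ha.mul_add_of_mul_eq_smul hlam ?_ ?_ ?_ ?_ hab)
  · show (1 - b * bd) * (1 - b * bd) = 1 - b * bd
    linear_combination (norm := noncomm_ring) b * hinv
  · exact (Commute.one_left b).sub_left (Commute.mul_left rfl hbbd.symm)
  · linear_combination (norm := noncomm_ring) -a * hbbd.eq - habd * b
  · convert hq using 1; noncomm_ring
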